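/- Let L be a positive integer and define D_L(z) = (2L+1)^{−1} ∑_{n=0}^{L} C(2L+1, 2n) z^{n−L} for z ∈ ℂ \ {0}. Then D_L does not vanish on the unit circle, and for every z ∈ ℂ with |z| = 1 one has 2^L/(2L+1) ≤ |D_L(z)| ≤ 2^{2L}/(2L+1). Moreover the minimum is attained at z = −1 with |D_L(−1)| = 2^L/(2L+1) and the maximum at z = 1 with |D_L(1)| = 2^{2L}/(2L+1). -/

import Mathlib

/-!
Write `z = w ^ 2` with `‖w‖ = 1` and `N = 2L + 1`. Keeping the even binomial terms gives
`2 (2L + 1) w ^ (2L) D_L(w²) = (1 + w) ^ N + (1 - w) ^ N`. Because `(1 + w) · conj (1 - w) = w - conj w`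
is purely imaginary and `N` is odd, the cross term of `‖(1 + w) ^ N + (1 - w) ^ N‖ ^ 2` vanishes,
leaving `a ^ N + b ^ N` with `a = ‖1 + w‖ ^ 2`, `b = ‖1 - w‖ ^ 2` and `a + b = 4` (parallelogram law).
On `a + b = 4` the power sum lies between `2 · 2 ^ N` (at `a = b = 2`, i.e. `w = i`, `z = -1`)
and `4 ^ N` (at `a = 4`, `b = 0`, i.e. `w = 1`, `z = 1`).
-/

open Complex

/-- The Thiran common factor `D_L` (closed binomial form). -/
noncomputable def DL (L : ℕ) (z : ℂ) : ℂ :=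
  (1 / (2 * (L : ℂ) + 1)) *
    ∑ n ∈ Finset.range (L + 1), (Nat.choose (2 * L + 1) (2 * n) : ℂ) * z ^ ((n : ℤ) - (L : ℤ))

open Finset ComplexConjugate

theorem sum_range_two_mul_eq_sum_pairs {M : Type*} [AddCommMonoid M] (f : ℕ → M) (n : ℕ) :
    ∑ k ∈ range (2 * n), f k = ∑ i ∈ range n, (f (2 * i) + f (2 * i + 1)) := by
  induction n with
  | zero => simp
  | succ n ih => rw [Nat.mul_succ, sum_range_succ, sum_range_succ, ih, sum_range_succ, add_assoc]

theorem one_add_pow_add_one_sub_pow {R : Type*} [CommRing R] (L : ℕ) (w : R) :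
    (1 + w) ^ (2 * L + 1) + (1 - w) ^ (2 * L + 1) =
      2 * ∑ n ∈ range (L + 1), ((2 * L + 1).choose (2 * n) : R) * (w ^ 2) ^ n := by
  rw [add_comm 1 w, sub_eq_neg_add, add_pow, add_pow, ← sum_add_distrib,
    show 2 * L + 1 + 1 = 2 * (L + 1) by ring, sum_range_two_mul_eq_sum_pairs, mul_sum]
  refine sum_congr rfl fun n _ => ?_
  rw [Even.neg_pow ⟨n, by ring⟩ w, Odd.neg_pow ⟨n, by ring⟩ w, ← pow_mul]
  ring

theorem DL_sq_eq (L : ℕ) {w : ℂ} (hw : w ≠ 0) :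
    DL L (w ^ 2) =
      ((1 + w) ^ (2 * L + 1) + (1 - w) ^ (2 * L + 1)) / (2 * (2 * L + 1) * w ^ (2 * L)) := by
  have hz : w ^ 2 ≠ 0 := pow_ne_zero 2 hw
  simp only [DL, zpow_sub₀ hz, zpow_natCast, div_eq_mul_inv, ← mul_assoc, ← sum_mul,
    one_add_pow_add_one_sub_pow, ← pow_mul]
  field_simp

theorem re_one_add_pow_mul_conj_one_sub_pow {w : ℂ} (hw : ‖w‖ = 1) {N : ℕ} (hN : Odd N) :
    ((1 + w) ^ N * conj ((1 - w) ^ N)).re = 0 := by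
  have hcross : (1 + w) * conj (1 - w) = w - conj w := by
    have : w * conj w = 1 := by rw [mul_conj', hw]; simp
    simp only [map_sub, map_one]
    linear_combination -this
  have hconj : conj ((w - conj w) ^ N) = -(w - conj w) ^ N := by
    rw [map_pow, map_sub, conj_conj, ← neg_sub, hN.neg_pow]
  rw [map_pow, ← mul_pow, hcross, ← ofReal_eq_zero, re_eq_add_conj, hconj, add_neg_cancel,
    zero_div]

theorem sq_norm_one_add_pow_add_one_sub_pow {w : ℂ} (hw : ‖w‖ = 1) {N : ℕ} (hN : Odd N) :
    ‖(1 + w) ^ N + (1 - w) ^ N‖ ^ 2 = (‖1 + w‖ ^ 2) ^ N + (‖1 - w‖ ^ 2) ^ N := by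
  rw [Complex.sq_norm, normSq_add, re_one_add_pow_mul_conj_one_sub_pow hw hN, mul_zero, add_zero]
  simp only [Complex.sq_norm, map_pow]

theorem sq_norm_one_add_add_sq_norm_one_sub {w : ℂ} (hw : ‖w‖ = 1) :
    ‖1 + w‖ ^ 2 + ‖1 - w‖ ^ 2 = 4 := by
  rw [parallelogram_law_with_norm ℝ, hw]
  norm_num

theorem sq_norm_DL_sq (L : ℕ) {w : ℂ} (hw : ‖w‖ = 1) :
    ‖DL L (w ^ 2)‖ ^ 2 =
      ((‖1 + w‖ ^ 2) ^ (2 * L + 1) + (‖1 - w‖ ^ 2) ^ (2 * L + 1)) / (2 * (2 * L + 1)) ^ 2 := by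
  have hw0 : w ≠ 0 := norm_ne_zero_iff.mp (by simp [hw])
  rw [DL_sq_eq L hw0, norm_div, div_pow, sq_norm_one_add_pow_add_one_sub_pow hw ⟨L, rfl⟩]
  congr 1
  rw [norm_mul, norm_pow, hw]
  norm_cast
  simp

theorem four_pow_div_sq_eq (L : ℕ) :
    (4 : ℝ) ^ (2 * L + 1) / (2 * (2 * L + 1)) ^ 2 = ((2 : ℝ) ^ (2 * L) / (2 * L + 1)) ^ 2 := by
  rw [show (4 : ℝ) = 2 ^ 2 by norm_num, ← pow_mul]
  field_simp
  ring

theorem sq_norm_DL_sq_mem_Icc (L : ℕ) {w : ℂ} (hw : ‖w‖ = 1) :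
    ‖DL L (w ^ 2)‖ ^ 2 ∈
      Set.Icc (((2 : ℝ) ^ L / (2 * L + 1)) ^ 2) (((2 : ℝ) ^ (2 * L) / (2 * L + 1)) ^ 2) := by
  have ha := sq_nonneg ‖1 + w‖
  have hb := sq_nonneg ‖1 - w‖
  have hsum := sq_norm_one_add_add_sq_norm_one_sub hw
  have four_pow : (4 : ℝ) ^ (2 * L + 1) = 2 ^ (2 * L) * 2 ^ (2 * L + 2) := by
    rw [← pow_add, show (4 : ℝ) = 2 ^ 2 by norm_num, ← pow_mul]
    ring_nf
  rw [sq_norm_DL_sq L hw]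
  constructor
  · have lower :
        (2 : ℝ) ^ (2 * L + 2) ≤ (‖1 + w‖ ^ 2) ^ (2 * L + 1) + (‖1 - w‖ ^ 2) ^ (2 * L + 1) := by
      refine le_of_mul_le_mul_left ?_ (pow_pos two_pos (2 * L))
      simpa [hsum, four_pow] using add_pow_le ha hb (2 * L + 1)
    calc ((2 : ℝ) ^ L / (2 * L + 1)) ^ 2 = 2 ^ (2 * L + 2) / (2 * (2 * L + 1)) ^ 2 := by
          field_simp
          ring
      _ ≤ _ := by gcongr
  · calc _ ≤ (4 : ℝ) ^ (2 * L + 1) / (2 * (2 * L + 1)) ^ 2 := by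
          gcongr
          exact hsum ▸ pow_add_pow_le ha hb (by omega)
      _ = _ := four_pow_div_sq_eq L

theorem DL_min_max_on_circle_general (L : ℕ) :
    (∀ z : ℂ, ‖z‖ = 1 → DL L z ≠ 0) ∧
    (∀ z : ℂ, ‖z‖ = 1 →
      (2 : ℝ) ^ L / (2 * (L : ℝ) + 1) ≤ ‖DL L z‖ ∧
      ‖DL L z‖ ≤ (2 : ℝ) ^ (2 * L) / (2 * (L : ℝ) + 1)) ∧
    ‖DL L (-1)‖ = (2 : ℝ) ^ L / (2 * (L : ℝ) + 1) ∧
    ‖DL L 1‖ = (2 : ℝ) ^ (2 * L) / (2 * (L : ℝ) + 1) := by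
  have bounds : ∀ z : ℂ, ‖z‖ = 1 →
      (2 : ℝ) ^ L / (2 * (L : ℝ) + 1) ≤ ‖DL L z‖ ∧
      ‖DL L z‖ ≤ (2 : ℝ) ^ (2 * L) / (2 * (L : ℝ) + 1) := by
    intro z hz
    obtain ⟨w, rfl⟩ := IsAlgClosed.exists_pow_nat_eq z two_pos
    have hw : ‖w‖ = 1 := by
      rwa [norm_pow, pow_eq_one_iff_of_nonneg (norm_nonneg w) two_ne_zero] at hz
    obtain ⟨hlo, hhi⟩ := sq_norm_DL_sq_mem_Icc L hw
    exact ⟨(sq_le_sq₀ (by positivity) (norm_nonneg _)).1 hlo,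
      (sq_le_sq₀ (norm_nonneg _) (by positivity)).1 hhi⟩
  refine ⟨fun z hz h0 => ?_, bounds, ?_, ?_⟩
  · have hlo := (bounds z hz).1
    rw [h0, norm_zero] at hlo
    exact hlo.not_gt (by positivity)
  · rw [← I_sq, ← sq_eq_sq₀ (norm_nonneg _) (by positivity), sq_norm_DL_sq L norm_I]
    norm_num [Complex.sq_norm, normSq_apply]
    field_simp
    ring
  · rw [← one_pow 2, ← sq_eq_sq₀ (norm_nonneg _) (by positivity), sq_norm_DL_sq L norm_one]
    norm_num
    exact four_pow_div_sq_eq L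

/-- `D_L` does not vanish on the unit circle; bounds and extrema of
its modulus there. -/
theorem DL_min_max_on_circle (L : ℕ) (hL : 0 < L) :
    (∀ z : ℂ, ‖z‖ = 1 → DL L z ≠ 0) ∧
    (∀ z : ℂ, ‖z‖ = 1 →
      (2 : ℝ) ^ L / (2 * (L : ℝ) + 1) ≤ ‖DL L z‖ ∧
      ‖DL L z‖ ≤ (2 : ℝ) ^ (2 * L) / (2 * (L : ℝ) + 1)) ∧
    ‖DL L (-1)‖ = (2 : ℝ) ^ L / (2 * (L : ℝ) + 1) ∧
    ‖DL L 1‖ = (2 : ℝ) ^ (2 * L) / (2 * (L : ℝ) + 1) :=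
  DL_min_max_on_circle_general L
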